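/- arXiv:2505.22656 — 6 statements merged into one kernel-verified Lean document; each statement's English description precedes it below -/
import Mathlib

section
/- Fix a < 0. There exist constants C > 0 and η₀ > 0 such that for all η ≥ η₀ one has ‖L₋(η) − (0, 1)‖ ≤ C/η and ‖L₊(η) − (−a, 1)/√(1+a²)‖ ≤ C/η, where ‖·‖ is the Euclidean norm on ℝ². -/
noncomputable def Mmat (a η : ℝ) : Matrix (Fin 2) (Fin 2) ℝ :=
  !![-η * a, 1 + η; 1, 0]

noncomputable def lamP (a η : ℝ) : ℝ :=
  (-(a * η) + Real.sqrt (a ^ 2 * η ^ 2 + 4 * (η + 1))) / 2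

noncomputable def lamM (a η : ℝ) : ℝ :=
  (-(a * η) - Real.sqrt (a ^ 2 * η ^ 2 + 4 * (η + 1))) / 2

noncomputable def Lp (a η : ℝ) : Fin 2 → ℝ :=
  (Real.sqrt ((1 + η) ^ 2 + lamP a η ^ 2))⁻¹ • ![lamP a η, 1 + η]

noncomputable def Lm (a η : ℝ) : Fin 2 → ℝ :=
  (Real.sqrt ((1 + η) ^ 2 + lamM a η ^ 2))⁻¹ • ![lamM a η, 1 + η]

noncomputable def eucNorm (v : Fin 2 → ℝ) : ℝ :=
  Real.sqrt (v 0 ^ 2 + v 1 ^ 2)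

noncomputable def Pmat (a η : ℝ) : Matrix (Fin 2) (Fin 2) ℝ :=
  Matrix.of ![Lp a η, Lm a η]

def Amat : Matrix (Fin 2) (Fin 2) ℝ := !![0, 1; 1, 0]

/-!
`L₊` and `L₋` are the unit vectors in the directions `(t, 1)` with slopes `t = λ₊/(1+η)` and
`t = λ₋/(1+η)`, and `t ↦ (t, 1)/√(1+t²)` is `1`-Lipschitz into the Euclidean plane, so it
suffices to estimate slopes. By Vieta `λ₊ λ₋ = -(1+η)` and `λ₊ + λ₋ = -aη`; as `λ₊ ≥ -aη`, the
first gives `|λ₋|/(1+η) ≤ 1/(|a|η)`, and the second gives `λ₊/(1+η) + a = (a - λ₋)/(1+η) = O(1/η)`.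
-/

noncomputable def unitDir (t : ℝ) : Fin 2 → ℝ :=
  (Real.sqrt (1 + t ^ 2))⁻¹ • ![t, 1]

lemma eucNorm_unitDir_sub_le (t s : ℝ) : eucNorm (unitDir t - unitDir s) ≤ |t - s| := by
  rw [eucNorm, ← Real.sqrt_sq_eq_abs]
  apply Real.sqrt_le_sqrt
  simp only [unitDir, Pi.sub_apply, Pi.smul_apply, smul_eq_mul, Matrix.cons_val_zero,
    Matrix.cons_val_one, mul_one]
  set A := Real.sqrt (1 + t ^ 2)
  set B := Real.sqrt (1 + s ^ 2)
  have hA : 1 ≤ A := Real.one_le_sqrt.mpr (by nlinarith)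
  have hB : 1 ≤ B := Real.one_le_sqrt.mpr (by nlinarith)
  have hA2 : A ^ 2 = 1 + t ^ 2 := Real.sq_sqrt (by positivity)
  have hB2 : B ^ 2 = 1 + s ^ 2 := Real.sq_sqrt (by positivity)
  clear_value A B
  have hP2 : (A * B) ^ 2 = (1 + t ^ 2) * (1 + s ^ 2) := by rw [mul_pow, hA2, hB2]
  have hP : 0 ≤ A * B := by positivity
  have hP_ge : 1 + t * s ≤ A * B :=
    (abs_le_of_sq_le_sq' (by nlinarith [sq_nonneg (t - s)]) hP).2
  have hP_ge' : 1 - t * s ≤ A * B :=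
    (abs_le_of_sq_le_sq' (by nlinarith [sq_nonneg (t + s)]) hP).2
  -- `A B - (1 + t s) = (t - s)² / (A B + 1 + t s)` and the denominator is at least `2`.
  have key : 2 * (A * B - (1 + t * s)) ≤ (t - s) ^ 2 * (A * B) := by
    nlinarith [mul_nonneg (sub_nonneg.mpr hP_ge) (by linarith : (0:ℝ) ≤ A * B + (1 + t * s) - 2),
      mul_nonneg (sq_nonneg (t - s)) (by nlinarith : (0:ℝ) ≤ A * B - 1)]
  have hAB : 0 < A * B := by positivity
  rw [← mul_le_mul_iff_of_pos_right (pow_pos hAB 2)]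
  have e : ((A⁻¹ * t - B⁻¹ * s) ^ 2 + (A⁻¹ - B⁻¹) ^ 2) * (A * B) ^ 2
      = 2 * (A * B) ^ 2 - 2 * (1 + t * s) * (A * B) := by
    field_simp
    linear_combination (-B ^ 2) * hA2 + (-A ^ 2) * hB2
  rw [e]
  nlinarith

lemma inv_sqrt_smul_eq_unitDir (x y : ℝ) (hy : 0 < y) :
    (Real.sqrt (y ^ 2 + x ^ 2))⁻¹ • ![x, y] = unitDir (x / y) := by
  have hsqrt : Real.sqrt (y ^ 2 + x ^ 2) = y * Real.sqrt (1 + (x / y) ^ 2) := by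
    rw [← Real.sqrt_sq hy.le, ← Real.sqrt_mul (sq_nonneg y), Real.sqrt_sq hy.le]
    field_simp
  ext i
  fin_cases i <;> simp [unitDir, hsqrt] <;> field_simp

lemma Lp_eq_unitDir (a : ℝ) {η : ℝ} (hη : -1 < η) : Lp a η = unitDir (lamP a η / (1 + η)) :=
  inv_sqrt_smul_eq_unitDir _ _ (by linarith)

lemma Lm_eq_unitDir (a : ℝ) {η : ℝ} (hη : -1 < η) : Lm a η = unitDir (lamM a η / (1 + η)) :=
  inv_sqrt_smul_eq_unitDir _ _ (by linarith)

lemma unitDir_zero : unitDir 0 = ![0, 1] := by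
  ext i; fin_cases i <;> simp [unitDir]

lemma unitDir_neg_eq_smul (a : ℝ) : unitDir (-a) = (Real.sqrt (1 + a ^ 2))⁻¹ • ![-a, 1] := by
  rw [unitDir, neg_sq]

lemma lamP_add_lamM (a η : ℝ) : lamP a η + lamM a η = -(a * η) := by
  rw [lamP, lamM]; ring

lemma lamP_mul_lamM (a : ℝ) {η : ℝ} (hη : -1 ≤ η) : lamP a η * lamM a η = -(1 + η) := by
  have h := Real.sq_sqrt (by nlinarith : 0 ≤ a ^ 2 * η ^ 2 + 4 * (η + 1))
  rw [lamP, lamM]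
  linear_combination (-1 / 4 : ℝ) * h

lemma neg_mul_le_lamP (a : ℝ) {η : ℝ} (hη : -1 ≤ η) : -(a * η) ≤ lamP a η := by
  have h : -(a * η) ≤ Real.sqrt (a ^ 2 * η ^ 2 + 4 * (η + 1)) :=
    Real.le_sqrt_of_sq_le (by nlinarith)
  rw [lamP]; linarith

lemma abs_lamM_div_le {a η : ℝ} (ha : a < 0) (hη : 0 < η) :
    |lamM a η / (1 + η)| ≤ -a⁻¹ / η := by
  have hP : -(a * η) ≤ lamP a η := neg_mul_le_lamP a (by linarith)
  have hprod := lamP_mul_lamM a (η := η) (by linarith)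
  have haη : 0 < -(a * η) := by nlinarith
  have hM : |lamM a η| = (1 + η) / lamP a η := by
    rw [eq_div_iff (by linarith), mul_comm, ← abs_of_pos (haη.trans_le hP), ← abs_mul, hprod,
      abs_neg, abs_of_pos (by linarith)]
  rw [abs_div, hM, abs_of_pos (by linarith : 0 < 1 + η), div_div_cancel_left' (by linarith)]
  calc (lamP a η)⁻¹ ≤ (-(a * η))⁻¹ := inv_anti₀ haη hP
    _ = -a⁻¹ / η := by field_simp

lemma abs_lamP_div_add_le {a η : ℝ} (ha : a < 0) (hη : 0 < η) :
    |lamP a η / (1 + η) - -a| ≤ (-a - a⁻¹) / η := by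
  have e : lamP a η / (1 + η) - -a = a / (1 + η) - lamM a η / (1 + η) := by
    field_simp
    linear_combination lamP_add_lamM a η
  calc |lamP a η / (1 + η) - -a| ≤ |a / (1 + η)| + |lamM a η / (1 + η)| := by
        rw [e]; exact abs_sub _ _
    _ ≤ -a / η + -a⁻¹ / η := by
        refine add_le_add ?_ (abs_lamM_div_le ha hη)
        rw [abs_div, abs_of_neg ha, abs_of_pos (by linarith)]
        gcongr <;> linarith
    _ = (-a - a⁻¹) / η := by ring

theorem stmt7 (a : ℝ) (ha : a < 0) :
    ∃ C > (0 : ℝ), ∃ η₀ > (0 : ℝ), ∀ η : ℝ, η₀ ≤ η →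
      eucNorm (Lm a η - ![0, 1]) ≤ C / η ∧
      eucNorm (Lp a η - (Real.sqrt (1 + a ^ 2))⁻¹ • ![-a, 1]) ≤ C / η := by
  refine ⟨-a - a⁻¹, by have := inv_lt_zero.mpr ha; linarith, 1, one_pos, fun η hη => ?_⟩
  have hη0 : 0 < η := one_pos.trans_le hη
  rw [Lm_eq_unitDir a (by linarith), Lp_eq_unitDir a (by linarith), ← unitDir_zero,
    ← unitDir_neg_eq_smul]
  constructor
  · calc eucNorm _ ≤ |lamM a η / (1 + η) - 0| := eucNorm_unitDir_sub_le _ _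
      _ ≤ -a⁻¹ / η := by rw [sub_zero]; exact abs_lamM_div_le ha hη0
      _ ≤ (-a - a⁻¹) / η := by gcongr; linarith
  · exact (eucNorm_unitDir_sub_le _ _).trans (abs_lamP_div_add_le ha hη0)
end

section
/- Fix a > 0. There exist constants C > 0 and η₀ > 0 such that for all η ≥ η₀ one has ‖L₋(η) − (−a, 1)/√(1+a²)‖ ≤ C/η and ‖L₊(η) − (0, 1)‖ ≤ C/η, where ‖·‖ is the Euclidean norm on ℝ². -/
/-!
Both rows are normalisations of `(λ, 1 + η)`, and normalisation is Lipschitz away from the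
origin: `‖x/‖x‖ - y/‖y‖‖ ≤ 2‖x - y‖/‖x‖`. Compare `(λ₋, 1 + η)` with `(1 + η)(-a, 1)` and
`(λ₊, 1 + η)` with `(0, 1 + η)`: only the first coordinates differ, by `λ₋ + a(1 + η)` and `λ₊`,
which stay bounded as `η → ∞`, while `‖x‖ ≥ 1 + η`.
-/

namespace NormedSpace

variable {V : Type*} [NormedAddCommGroup V] [NormedSpace ℝ V]

lemma norm_normalize_le_one (y : V) : ‖normalize y‖ ≤ 1 := by
  by_cases hy : y = 0
  · simp [hy]
  · exact (norm_normalize hy).le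

lemma norm_normalize_sub_normalize_le {x : V} (hx : x ≠ 0) (y : V) :
    ‖normalize x - normalize y‖ ≤ 2 * ‖x - y‖ / ‖x‖ := by
  have hx' : 0 < ‖x‖ := norm_pos_iff.2 hx
  have hdecomp : normalize x - normalize y =
      ‖x‖⁻¹ • ((x - y) + (‖y‖ - ‖x‖) • normalize y) := by
    rw [smul_add, sub_smul, smul_sub, smul_sub, norm_smul_normalize, smul_smul,
      inv_mul_cancel₀ hx'.ne', one_smul, normalize]
    abel
  rw [hdecomp, norm_smul, norm_inv, norm_norm, inv_mul_eq_div, div_le_div_iff_of_pos_right hx']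
  calc ‖x - y + (‖y‖ - ‖x‖) • normalize y‖
      ≤ ‖x - y‖ + |‖y‖ - ‖x‖| * ‖normalize y‖ := by
        simpa only [norm_smul, Real.norm_eq_abs] using
          norm_add_le (x - y) ((‖y‖ - ‖x‖) • normalize y)
    _ ≤ ‖x - y‖ + ‖x - y‖ * 1 := by
        gcongr
        · rw [abs_sub_comm]; exact abs_norm_sub_norm_le x y
        · exact norm_normalize_le_one y
    _ = 2 * ‖x - y‖ := by ring

end NormedSpace

open NormedSpace

lemma eucNorm_eq_norm (v : Fin 2 → ℝ) : eucNorm v = ‖WithLp.toLp 2 v‖ := by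
  simp [eucNorm, EuclideanSpace.norm_eq, Fin.sum_univ_two]

lemma norm_vec2 (x y : ℝ) : ‖!₂[x, y]‖ = √(x ^ 2 + y ^ 2) := by
  simp [EuclideanSpace.norm_eq, Fin.sum_univ_two]

lemma toLp_inv_sqrt_smul_eq_normalize (l c : ℝ) :
    WithLp.toLp 2 ((√(c ^ 2 + l ^ 2))⁻¹ • ![l, c]) = normalize !₂[l, c] := by
  rw [NormedSpace.normalize, norm_vec2, add_comm, WithLp.toLp_smul]

lemma norm_normalize_vec2_sub_le (l m : ℝ) {c : ℝ} (hc : 0 < c) :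
    ‖normalize !₂[l, c] - normalize !₂[m, c]‖ ≤ 2 * |l - m| / c := by
  have hne : !₂[l, c] ≠ 0 := by
    intro h
    simpa [hc.ne'] using congrArg (· 1) h
  have hsub : !₂[l, c] - !₂[m, c] = !₂[l - m, 0] := by
    ext i; fin_cases i <;> simp
  have hc_le : c ≤ ‖!₂[l, c]‖ := by
    rw [norm_vec2]
    exact Real.le_sqrt_of_sq_le (by nlinarith [sq_nonneg l])
  calc _ ≤ 2 * ‖!₂[l, c] - !₂[m, c]‖ / ‖!₂[l, c]‖ := norm_normalize_sub_normalize_le hne _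
    _ ≤ 2 * |l - m| / c := by
      rw [hsub, norm_vec2, zero_pow two_ne_zero, add_zero, Real.sqrt_sq_eq_abs]
      gcongr

section Eigenvalues

variable {a η : ℝ}

lemma sq_sqrt_disc (hη : 0 ≤ η) :
    √(a ^ 2 * η ^ 2 + 4 * (η + 1)) ^ 2 = a ^ 2 * η ^ 2 + 4 * (η + 1) :=
  Real.sq_sqrt (by positivity)

lemma mul_le_sqrt_disc (hη : 0 ≤ η) : a * η ≤ √(a ^ 2 * η ^ 2 + 4 * (η + 1)) :=
  Real.le_sqrt_of_sq_le (by nlinarith)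

/-- With `s = √(a²η² + 4(η + 1))`: `λ₋ + a(1 + η) = (a(η + 2) - s)/2`,
`(a(η + 2) - s)(a(η + 2) + s) = 4(a² - 1)(η + 1)` and `a(η + 2) + s ≥ 2a(η + 1)`. -/
lemma abs_lamM_add_le (ha : 0 < a) (hη : 0 ≤ η) :
    |lamM a η + a * (1 + η)| ≤ |a ^ 2 - 1| / a := by
  set s := √(a ^ 2 * η ^ 2 + 4 * (η + 1))
  have hs2 : s ^ 2 = a ^ 2 * η ^ 2 + 4 * (η + 1) := sq_sqrt_disc hη
  have hs : a * η ≤ s := mul_le_sqrt_disc hη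
  have hprod : |lamM a η + a * (1 + η)| * (s + a * (η + 2)) = |a ^ 2 - 1| * (2 * (η + 1)) := by
    rw [← abs_of_pos (by nlinarith : 0 < s + a * (η + 2)), ← abs_mul,
      ← abs_of_pos (by linarith : 0 < 2 * (η + 1)), ← abs_mul, lamM]
    congr 1
    linear_combination (-1 / 2 : ℝ) * hs2
  rw [le_div_iff₀ ha]
  nlinarith [abs_nonneg (lamM a η + a * (1 + η)), abs_nonneg (a ^ 2 - 1)]

lemma lamP_nonneg (hη : 0 ≤ η) : 0 ≤ lamP a η := by
  have := mul_le_sqrt_disc (a := a) hη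
  rw [lamP]; linarith

/-- `λ₊ = 2(η + 1)/(s + aη)` with `s = √(a²η² + 4(η + 1)) ≥ aη`. -/
lemma lamP_le (ha : 0 < a) (hη : 0 < η) : lamP a η ≤ (1 + η) / (a * η) := by
  set s := √(a ^ 2 * η ^ 2 + 4 * (η + 1))
  have hs2 : s ^ 2 = a ^ 2 * η ^ 2 + 4 * (η + 1) := sq_sqrt_disc hη.le
  have hs : a * η ≤ s := mul_le_sqrt_disc hη.le
  have haη : 0 < a * η := mul_pos ha hη
  rw [le_div_iff₀ haη, lamP]
  nlinarith

end Eigenvalues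

lemma eucNorm_Lm_sub_le {a η : ℝ} (ha : 0 < a) (hη : 0 ≤ η) :
    eucNorm (Lm a η - (√(1 + a ^ 2))⁻¹ • ![-a, 1]) ≤ 2 * (|a ^ 2 - 1| / a) / (1 + η) := by
  have hη1 : 0 < 1 + η := by linarith
  have hLm : WithLp.toLp 2 (Lm a η) = normalize !₂[lamM a η, 1 + η] :=
    toLp_inv_sqrt_smul_eq_normalize _ _
  have hlimit : WithLp.toLp 2 ((√(1 + a ^ 2))⁻¹ • ![-a, 1]) =
      normalize !₂[-(a * (1 + η)), 1 + η] := by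
    have hscale : !₂[-(a * (1 + η)), 1 + η] = (1 + η) • !₂[-a, 1] := by
      ext i; fin_cases i <;> simp [mul_comm]
    rw [hscale, normalize_smul_of_pos hη1, ← toLp_inv_sqrt_smul_eq_normalize, one_pow, neg_sq]
  rw [eucNorm_eq_norm, WithLp.toLp_sub, hLm, hlimit]
  calc _ ≤ 2 * |lamM a η - -(a * (1 + η))| / (1 + η) := norm_normalize_vec2_sub_le _ _ hη1
    _ ≤ 2 * (|a ^ 2 - 1| / a) / (1 + η) := by
      rw [sub_neg_eq_add]
      gcongr
      exact abs_lamM_add_le ha hη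

lemma eucNorm_Lp_sub_le {a η : ℝ} (ha : 0 < a) (hη : 0 < η) :
    eucNorm (Lp a η - ![0, 1]) ≤ 2 / (a * η) := by
  have hη1 : 0 < 1 + η := by linarith
  have hLp : WithLp.toLp 2 (Lp a η) = normalize !₂[lamP a η, 1 + η] :=
    toLp_inv_sqrt_smul_eq_normalize _ _
  have hlimit : WithLp.toLp 2 ![(0 : ℝ), 1] = normalize !₂[0, 1 + η] := by
    have hscale : !₂[0, 1 + η] = (1 + η) • !₂[(0 : ℝ), 1] := by
      ext i; fin_cases i <;> simp
    rw [hscale, normalize_smul_of_pos hη1, ← toLp_inv_sqrt_smul_eq_normalize]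
    simp
  rw [eucNorm_eq_norm, WithLp.toLp_sub, hLp, hlimit]
  calc _ ≤ 2 * |lamP a η - 0| / (1 + η) := norm_normalize_vec2_sub_le _ _ hη1
    _ ≤ 2 * ((1 + η) / (a * η)) / (1 + η) := by
      rw [sub_zero, abs_of_nonneg (lamP_nonneg hη.le)]
      gcongr
      exact lamP_le ha hη
    _ = 2 / (a * η) := by field_simp

theorem stmt8 (a : ℝ) (ha : 0 < a) :
    ∃ C > (0 : ℝ), ∃ η₀ > (0 : ℝ), ∀ η : ℝ, η₀ ≤ η →
      eucNorm (Lm a η - (Real.sqrt (1 + a ^ 2))⁻¹ • ![-a, 1]) ≤ C / η ∧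
      eucNorm (Lp a η - ![0, 1]) ≤ C / η := by
  refine ⟨2 * (|a ^ 2 - 1| + 1) / a, by positivity, 1, one_pos, fun η hη => ⟨?_, ?_⟩⟩
  · calc _ ≤ 2 * (|a ^ 2 - 1| / a) / (1 + η) := eucNorm_Lm_sub_le ha (by linarith)
      _ ≤ 2 * ((|a ^ 2 - 1| + 1) / a) / η := by gcongr <;> linarith
      _ = 2 * (|a ^ 2 - 1| + 1) / a / η := by ring
  · calc _ ≤ 2 / (a * η) := eucNorm_Lp_sub_le ha (by linarith)
      _ ≤ 2 * (|a ^ 2 - 1| + 1) / (a * η) := by gcongr; linarith [abs_nonneg (a ^ 2 - 1)]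
      _ = 2 * (|a ^ 2 - 1| + 1) / a / η := by rw [div_div]
end

section
/- Fix a ∈ ℝ. As η → 0⁺, the projected flux matrices converge to the upwind splitting of A: A·P(η)⁻¹·diag(1,0)·P(η) → A₊ and A·P(η)⁻¹·diag(0,1)·P(η) → A₋, where A is the 2×2 matrix with rows (0,1) and (1,0), A₊ = (1/2)·[[1,1],[1,1]] and A₋ = (1/2)·[[−1,1],[1,−1]]. -/
lemma sqrt4 : Real.sqrt 4 = 2 := by
  rw [show (4:ℝ) = 2 ^ 2 by norm_num, Real.sqrt_sq (by norm_num)]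

lemma lamP0 (a : ℝ) : lamP a 0 = 1 := by
  simp [lamP, sqrt4]

lemma lamM0 (a : ℝ) : lamM a 0 = -1 := by
  simp [lamM, sqrt4]

lemma Pmat0 (a : ℝ) :
    Pmat a 0 = (Real.sqrt 2)⁻¹ • !![(1:ℝ), 1; -1, 1] := by
  ext i j
  fin_cases i <;> fin_cases j <;>
    simp [Pmat, Lp, Lm, lamP0, lamM0] <;> norm_num

lemma sqrt2_pos : (0:ℝ) < Real.sqrt 2 := Real.sqrt_pos.2 (by norm_num)

lemma Pinv0 (a : ℝ) :
    (Pmat a 0)⁻¹ = (Real.sqrt 2 / 2) • !![(1:ℝ), -1; 1, 1] := by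
  have hs : Real.sqrt 2 ^ 2 = 2 := Real.sq_sqrt (by norm_num)
  have hs0 : Real.sqrt 2 ≠ 0 := ne_of_gt sqrt2_pos
  apply Matrix.inv_eq_right_inv
  rw [Pmat0]
  ext i j
  fin_cases i <;> fin_cases j <;>
    · simp [Matrix.mul_apply, Fin.sum_univ_two]
      try field_simp
      try nlinarith [hs]

lemma detPmat0 (a : ℝ) : (Pmat a 0).det = 1 := by
  have hs : Real.sqrt 2 ^ 2 = 2 := Real.sq_sqrt (by norm_num)
  rw [Pmat0, Matrix.det_smul]
  simp [Matrix.det_fin_two_of]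
  try field_simp
  try nlinarith [hs]

lemma contLamP (a : ℝ) : Continuous fun η => lamP a η := by
  unfold lamP; fun_prop

lemma contLamM (a : ℝ) : Continuous fun η => lamM a η := by
  unfold lamM; fun_prop

lemma contPmat (a : ℝ) : ContinuousAt (fun η => Pmat a η) 0 := by
  have hs0 : Real.sqrt 2 ≠ 0 := ne_of_gt sqrt2_pos
  have hP : ContinuousAt (fun η => (Real.sqrt ((1 + η) ^ 2 + lamP a η ^ 2))⁻¹) 0 := by
    apply ContinuousAt.inv₀
    · exact (Real.continuous_sqrt.comp (by have := contLamP a; fun_prop)).continuousAt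
    · simp [lamP0]
  have hcM : ContinuousAt (fun η => (Real.sqrt ((1 + η) ^ 2 + lamM a η ^ 2))⁻¹) 0 := by
    apply ContinuousAt.inv₀
    · exact (Real.continuous_sqrt.comp (by have := contLamM a; fun_prop)).continuousAt
    · simp [lamM0]
  refine continuousAt_pi.2 fun i => continuousAt_pi.2 fun j => ?_
  fin_cases i <;> fin_cases j <;> simp only [Pmat, Matrix.of_apply, Matrix.cons_val',
    Matrix.cons_val_zero, Matrix.cons_val_one, Matrix.head_cons, Matrix.empty_val',
    Matrix.cons_val_fin_one, Fin.mk_zero, Fin.mk_one, Lp, Lm, Pi.smul_apply, smul_eq_mul]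
  · exact hP.mul (contLamP a).continuousAt
  · exact hP.mul (by fun_prop)
  · exact hcM.mul (contLamM a).continuousAt
  · exact hcM.mul (by fun_prop)

theorem stmt10 (a : ℝ) :
    Filter.Tendsto (fun η => Amat * (Pmat a η)⁻¹ * !![(1:ℝ), 0; 0, 0] * Pmat a η)
      (nhdsWithin 0 (Set.Ioi 0)) (nhds ((1 / 2 : ℝ) • !![(1:ℝ), 1; 1, 1])) ∧
    Filter.Tendsto (fun η => Amat * (Pmat a η)⁻¹ * !![(0:ℝ), 0; 0, 1] * Pmat a η)
      (nhdsWithin 0 (Set.Ioi 0)) (nhds ((1 / 2 : ℝ) • !![(-1:ℝ), 1; 1, -1])) := by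
  have hs : Real.sqrt 2 ^ 2 = 2 := Real.sq_sqrt (by norm_num)
  have hs0 : Real.sqrt 2 ≠ 0 := ne_of_gt sqrt2_pos
  have hinv : ContinuousAt Inv.inv (Pmat a 0) := by
    apply continuousAt_matrix_inv
    rw [Ring.inverse_eq_inv', detPmat0]
    exact continuousAt_inv₀ one_ne_zero
  have hcinv : ContinuousAt (fun η => (Pmat a η)⁻¹) 0 := hinv.comp (contPmat a)
  have key : ∀ D T : Matrix (Fin 2) (Fin 2) ℝ,
      Amat * (Pmat a 0)⁻¹ * D * Pmat a 0 = T →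
      Filter.Tendsto (fun η => Amat * (Pmat a η)⁻¹ * D * Pmat a η)
        (nhdsWithin 0 (Set.Ioi 0)) (nhds T) := by
    intro D T hT
    have hc : ContinuousAt (fun η => Amat * (Pmat a η)⁻¹ * D * Pmat a η) 0 :=
      ((continuousAt_const.mul hcinv).mul continuousAt_const).mul (contPmat a)
    rw [← hT]
    exact hc.continuousWithinAt
  constructor <;> apply key <;>
    · rw [Pinv0, Pmat0]
      ext i j
      fin_cases i <;> fin_cases j <;>
        · simp [Amat, Matrix.mul_apply, Fin.sum_univ_two]
          try field_simp
          try nlinarith [hs]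
end

section
/- Fix a < 0. As η → ∞, the inverse matrix P(η)⁻¹ converges to the 2×2 matrix with rows (−√(1+a²)/a, 1/a) and (0, 1); equivalently, its first column (the right vector dual to L₊) converges to (−√(1+a²)/a, 0)ᵀ, a positive multiple of (−1/a, 0)ᵀ, and its second column (the right vector dual to L₋) converges to (1/a, 1)ᵀ. -/
/-! For a < 0 the discriminant satisfies √(a²η² + 4(η+1)) ~ |a| η, so λ₊/(1+η) → -a and
λ₋/(1+η) → 0. Normalizing (λ, 1+η) only depends on λ/(1+η), hence the rows L₊, L₋ converge to
(-a, 1)/√(1+a²) and (0, 1). The limit matrix is upper triangular with determinant -a/√(1+a²) ≠ 0,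
and matrix inversion is continuous at invertible matrices, so P(η)⁻¹ converges to its inverse. -/

open Filter Topology

lemma tendsto_inv_one_add_atTop : Tendsto (fun η : ℝ => (1 + η)⁻¹) atTop (𝓝 0) :=
  (tendsto_atTop_add_const_left atTop 1 tendsto_id).inv_tendsto_atTop

lemma tendsto_div_one_add_atTop : Tendsto (fun η : ℝ => η / (1 + η)) atTop (𝓝 1) := by
  have h := (tendsto_const_nhds (x := (1 : ℝ))).sub tendsto_inv_one_add_atTop
  rw [sub_zero] at h
  refine h.congr' ?_
  filter_upwards [eventually_gt_atTop 0] with η hη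
  field_simp
  ring

lemma tendsto_sqrt_discr_div_atTop (a : ℝ) :
    Tendsto (fun η => √(a ^ 2 * η ^ 2 + 4 * (η + 1)) / (1 + η)) atTop (𝓝 |a|) := by
  have h := ((tendsto_const_nhds.mul (tendsto_div_one_add_atTop.pow 2)).add
    (tendsto_const_nhds.mul tendsto_inv_one_add_atTop)).sqrt (x := a ^ 2 * 1 ^ 2 + 4 * 0)
  rw [show a ^ 2 * 1 ^ 2 + 4 * 0 = a ^ 2 by ring, Real.sqrt_sq_eq_abs] at h
  refine h.congr' ?_
  filter_upwards [eventually_gt_atTop 0] with η hη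
  rw [show a ^ 2 * (η / (1 + η)) ^ 2 + 4 * (1 + η)⁻¹ =
      (a ^ 2 * η ^ 2 + 4 * (η + 1)) / (1 + η) ^ 2 by
      field_simp; ring, Real.sqrt_div' _ (sq_nonneg _), Real.sqrt_sq (by linarith)]

lemma lamP_div_one_add (a η : ℝ) : lamP a η / (1 + η) =
    (-a * (η / (1 + η)) + √(a ^ 2 * η ^ 2 + 4 * (η + 1)) / (1 + η)) / 2 := by
  rw [lamP]; ring

lemma lamM_div_one_add (a η : ℝ) : lamM a η / (1 + η) =
    (-a * (η / (1 + η)) - √(a ^ 2 * η ^ 2 + 4 * (η + 1)) / (1 + η)) / 2 := by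
  rw [lamM]; ring

lemma tendsto_lamP_div_atTop (a : ℝ) :
    Tendsto (fun η => lamP a η / (1 + η)) atTop (𝓝 ((-a + |a|) / 2)) := by
  have h := (((tendsto_const_nhds (x := -a)).mul tendsto_div_one_add_atTop).add
    (tendsto_sqrt_discr_div_atTop a)).div_const 2
  rw [mul_one] at h
  exact h.congr fun η => (lamP_div_one_add a η).symm

lemma tendsto_lamM_div_atTop (a : ℝ) :
    Tendsto (fun η => lamM a η / (1 + η)) atTop (𝓝 ((-a - |a|) / 2)) := by
  have h := (((tendsto_const_nhds (x := -a)).mul tendsto_div_one_add_atTop).sub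
    (tendsto_sqrt_discr_div_atTop a)).div_const 2
  rw [mul_one] at h
  exact h.congr fun η => (lamM_div_one_add a η).symm

lemma normalize_eq_of_pos {f g : ℝ} (hg : 0 < g) :
    (√(g ^ 2 + f ^ 2))⁻¹ • ![f, g] = (√(1 + (f / g) ^ 2))⁻¹ • ![f / g, 1] := by
  have : g ^ 2 + f ^ 2 = g ^ 2 * (1 + (f / g) ^ 2) := by field_simp
  rw [this, Real.sqrt_mul (sq_nonneg g), Real.sqrt_sq hg.le, mul_inv, mul_smul]
  ext i
  fin_cases i <;> simp <;> field_simp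

lemma tendsto_normalize {α : Type*} {l : Filter α} {f g : α → ℝ} {L : ℝ}
    (hg : ∀ᶠ x in l, 0 < g x) (hfg : Tendsto (fun x => f x / g x) l (𝓝 L)) :
    Tendsto (fun x => (√(g x ^ 2 + f x ^ 2))⁻¹ • ![f x, g x]) l
      (𝓝 ((√(1 + L ^ 2))⁻¹ • ![L, 1])) := by
  have hnorm : Continuous fun x : ℝ => (√(1 + x ^ 2))⁻¹ :=
    (by fun_prop : Continuous fun x : ℝ => √(1 + x ^ 2)).inv₀ fun x => by positivity
  have hvec : Continuous fun x : ℝ => ![x, 1] := continuous_id.matrixVecCons continuous_const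
  have hcont : Continuous fun x : ℝ => (√(1 + x ^ 2))⁻¹ • ![x, 1] := hnorm.smul hvec
  refine ((hcont.tendsto L).comp hfg).congr' ?_
  filter_upwards [hg] with x hx
  exact (normalize_eq_of_pos hx).symm

lemma Filter.Tendsto.matrix_inv {α n K : Type*} [Fintype n] [DecidableEq n] [Field K]
    [TopologicalSpace K] [IsTopologicalRing K] [ContinuousInv₀ K] {l : Filter α}
    {A : α → Matrix n n K} {B : Matrix n n K} (hA : Tendsto A l (𝓝 B)) (hB : B.det ≠ 0) :
    Tendsto (fun x => (A x)⁻¹) l (𝓝 B⁻¹) := by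
  have hdet : ContinuousAt Ring.inverse B.det := by
    rw [Ring.inverse_eq_inv']
    exact continuousAt_inv₀ hB
  exact (continuousAt_matrix_inv B hdet).tendsto.comp hA

lemma tendsto_Pmat_atTop {a : ℝ} (ha : a < 0) :
    Tendsto (Pmat a) atTop (𝓝 !![-a / √(1 + a ^ 2), 1 / √(1 + a ^ 2); 0, 1]) := by
  have hpos : ∀ᶠ η : ℝ in atTop, 0 < 1 + η :=
    (eventually_gt_atTop (-1)).mono fun η hη => by linarith
  have hP := tendsto_normalize hpos (tendsto_lamP_div_atTop a)
  have hM := tendsto_normalize hpos (tendsto_lamM_div_atTop a)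
  rw [abs_of_neg ha, show (-a + -a) / 2 = -a by ring, neg_sq] at hP
  rw [abs_of_neg ha, show (-a - -a) / 2 = 0 by ring] at hM
  rw [zero_pow two_ne_zero, add_zero, Real.sqrt_one, inv_one, one_smul] at hM
  have hlim : !![-a / √(1 + a ^ 2), 1 / √(1 + a ^ 2); 0, 1] =
      Matrix.of ![(√(1 + a ^ 2))⁻¹ • ![-a, 1], ![0, 1]] := by
    ext i j
    fin_cases i <;> fin_cases j <;> simp [div_eq_inv_mul]
  rw [hlim]
  exact hP.matrixVecCons (hM.matrixVecCons tendsto_const_nhds)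

lemma Matrix.inv_fin_two_upper {K : Type*} [Field K] {x y : K} (hx : x ≠ 0) :
    (!![x, y; 0, 1])⁻¹ = !![x⁻¹, -y / x; 0, 1] := by
  refine Matrix.inv_eq_left_inv ?_
  ext i j
  fin_cases i <;> fin_cases j <;> simp [Matrix.mul_apply, Fin.sum_univ_two, hx]
  field_simp
  ring

theorem stmt13 (a : ℝ) (ha : a < 0) :
    Filter.Tendsto (fun η => (Pmat a η)⁻¹)
      Filter.atTop (nhds !![-Real.sqrt (1 + a ^ 2) / a, 1 / a; 0, 1]) ∧
    Filter.Tendsto (fun η => fun i => (Pmat a η)⁻¹ i 0)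
      Filter.atTop (nhds ![-Real.sqrt (1 + a ^ 2) / a, 0]) ∧
    (∃ c > (0 : ℝ), (![-Real.sqrt (1 + a ^ 2) / a, 0] : Fin 2 → ℝ) = c • ![-1 / a, 0]) ∧
    Filter.Tendsto (fun η => fun i => (Pmat a η)⁻¹ i 1)
      Filter.atTop (nhds ![1 / a, 1]) := by
  have hc : 0 < √(1 + a ^ 2) := Real.sqrt_pos.mpr (by positivity)
  have hx : -a / √(1 + a ^ 2) ≠ 0 := div_ne_zero (neg_ne_zero.mpr ha.ne) hc.ne'
  have hlim : (!![-a / √(1 + a ^ 2), 1 / √(1 + a ^ 2); 0, 1])⁻¹ =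
      !![-√(1 + a ^ 2) / a, 1 / a; 0, 1] := by
    rw [Matrix.inv_fin_two_upper hx]
    ext i j
    fin_cases i <;> fin_cases j <;> simp <;> field_simp [ha.ne]
  have hInv := (tendsto_Pmat_atTop ha).matrix_inv (by simpa [Matrix.det_fin_two_of] using hx)
  rw [hlim] at hInv
  have hcol (j : Fin 2) : Tendsto (fun η i => (Pmat a η)⁻¹ i j) atTop
      (𝓝 fun i => !![-√(1 + a ^ 2) / a, 1 / a; 0, 1] i j) :=
    tendsto_pi_nhds.mpr fun i => tendsto_pi_nhds.mp (tendsto_pi_nhds.mp hInv i) j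
  refine ⟨hInv, ?_, ⟨√(1 + a ^ 2), hc, ?_⟩, ?_⟩
  · convert hcol 0 using 2
    ext i; fin_cases i <;> rfl
  · ext i; fin_cases i <;> simp; ring
  · convert hcol 1 using 2
    ext i; fin_cases i <;> rfl
end

section
/- Fix a > 0. As η → ∞, the inverse matrix P(η)⁻¹ converges to the 2×2 matrix with rows (1/a, −√(1+a²)/a) and (1, 0); equivalently, its first column (the right vector dual to L₊) converges to (1/a, 1)ᵀ and its second column (the right vector dual to L₋) converges to (−√(1+a²)/a, 0)ᵀ, a negative multiple of (1/a, 0)ᵀ. -/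
noncomputable def sqf (a x : ℝ) : ℝ := Real.sqrt (a ^ 2 + 4 * x + 4 * x ^ 2)
noncomputable def phiP (a x : ℝ) : ℝ := 2 * (1 + x) / (sqf a x + a)
noncomputable def psiM (a x : ℝ) : ℝ := (-a - sqf a x) / 2

noncomputable def Pfun (a x : ℝ) : Matrix (Fin 2) (Fin 2) ℝ :=
  !![x * phiP a x / Real.sqrt ((1 + x) ^ 2 + (x * phiP a x) ^ 2),
     (1 + x) / Real.sqrt ((1 + x) ^ 2 + (x * phiP a x) ^ 2);
     psiM a x / Real.sqrt ((1 + x) ^ 2 + (psiM a x) ^ 2),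
     (1 + x) / Real.sqrt ((1 + x) ^ 2 + (psiM a x) ^ 2)]

lemma sqf_eq (a η : ℝ) (hη : 0 < η) :
    sqf a η⁻¹ = Real.sqrt (a ^ 2 * η ^ 2 + 4 * (η + 1)) / η := by
  have h : a ^ 2 + 4 * η⁻¹ + 4 * η⁻¹ ^ 2 = (a ^ 2 * η ^ 2 + 4 * (η + 1)) * (η⁻¹) ^ 2 := by
    field_simp; try ring
  rw [sqf, h, Real.sqrt_mul (by positivity), Real.sqrt_sq (by positivity)]
  rw [div_eq_mul_inv]

lemma lamP_eq (a η : ℝ) (ha : 0 < a) (hη : 0 < η) : lamP a η = phiP a η⁻¹ := by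
  set f := Real.sqrt (a ^ 2 * η ^ 2 + 4 * (η + 1)) with hf
  have hf2 : f ^ 2 = a ^ 2 * η ^ 2 + 4 * (η + 1) := Real.sq_sqrt (by positivity)
  have hfpos : 0 ≤ f := Real.sqrt_nonneg _
  have hden : f / η + a ≠ 0 := by positivity
  rw [lamP, phiP, sqf_eq a η hη, ← hf]
  rw [div_eq_div_iff (by norm_num) hden]
  field_simp
  nlinarith [hf2]

lemma lamM_eq (a η : ℝ) (hη : 0 < η) : lamM a η = η * psiM a η⁻¹ := by
  rw [lamM, psiM, sqf_eq a η hη]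
  field_simp

lemma denP_eq (a η : ℝ) (ha : 0 < a) (hη : 0 < η) :
    Real.sqrt ((1 + η⁻¹) ^ 2 + (η⁻¹ * phiP a η⁻¹) ^ 2)
      = Real.sqrt ((1 + η) ^ 2 + lamP a η ^ 2) / η := by
  have h : (1 + η⁻¹) ^ 2 + (η⁻¹ * phiP a η⁻¹) ^ 2
      = ((1 + η) ^ 2 + lamP a η ^ 2) * (η⁻¹) ^ 2 := by
    rw [← lamP_eq a η ha hη]; field_simp; try ring
  rw [h, Real.sqrt_mul (by positivity), Real.sqrt_sq (by positivity), div_eq_mul_inv]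

lemma denM_eq (a η : ℝ) (hη : 0 < η) :
    Real.sqrt ((1 + η⁻¹) ^ 2 + (psiM a η⁻¹) ^ 2)
      = Real.sqrt ((1 + η) ^ 2 + lamM a η ^ 2) / η := by
  have hl : psiM a η⁻¹ = lamM a η / η := by
    rw [lamM_eq a η hη]; field_simp
  have h : (1 + η⁻¹) ^ 2 + (psiM a η⁻¹) ^ 2
      = ((1 + η) ^ 2 + lamM a η ^ 2) * (η⁻¹) ^ 2 := by
    rw [hl]; field_simp; try ring
  rw [h, Real.sqrt_mul (by positivity), Real.sqrt_sq (by positivity), div_eq_mul_inv]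

lemma Pmat_eq (a η : ℝ) (ha : 0 < a) (hη : 0 < η) : Pmat a η = Pfun a η⁻¹ := by
  have hη' : η ≠ 0 := ne_of_gt hη
  have hOp : (0:ℝ) < Real.sqrt ((1 + η) ^ 2 + lamP a η ^ 2) :=
    Real.sqrt_pos.mpr (by positivity)
  have hOm : (0:ℝ) < Real.sqrt ((1 + η) ^ 2 + lamM a η ^ 2) :=
    Real.sqrt_pos.mpr (by positivity)
  ext i j
  fin_cases i <;> fin_cases j <;> simp [Pmat, Pfun, Lp, Lm, smul_eq_mul]
  · rw [denP_eq a η ha hη, ← lamP_eq a η ha hη]; field_simp; try ring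
  · rw [denP_eq a η ha hη]; field_simp; try ring
  · rw [denM_eq a η hη, lamM_eq a η hη]; field_simp; try ring
  · rw [denM_eq a η hη]; field_simp; try ring

noncomputable def Pinf (a : ℝ) : Matrix (Fin 2) (Fin 2) ℝ :=
  !![0, 1; -a / Real.sqrt (1 + a ^ 2), 1 / Real.sqrt (1 + a ^ 2)]

lemma sqf_zero (a : ℝ) (ha : 0 < a) : sqf a 0 = a := by
  simp [sqf, Real.sqrt_sq ha.le]

lemma psiM_zero (a : ℝ) (ha : 0 < a) : psiM a 0 = -a := by
  simp [psiM, sqf_zero a ha]; ring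

lemma Pfun_zero (a : ℝ) (ha : 0 < a) : Pfun a 0 = Pinf a := by
  ext i j
  fin_cases i <;> fin_cases j <;>
    simp [Pfun, Pinf, psiM_zero a ha] <;> norm_num

lemma Pfun_contAt (a : ℝ) (ha : 0 < a) : ContinuousAt (Pfun a) 0 := by
  have hsq : ContinuousAt (sqf a) 0 := by
    unfold sqf; exact Real.continuous_sqrt.continuousAt.comp (by fun_prop)
  have hphi : ContinuousAt (phiP a) 0 := by
    unfold phiP
    exact ContinuousAt.div (by fun_prop) (hsq.add continuousAt_const)
      (by rw [sqf_zero a ha]; positivity)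
  have hpsi : ContinuousAt (psiM a) 0 := by
    unfold psiM; exact (continuousAt_const.sub hsq).div_const _
  have hinP : ContinuousAt (fun x => (1 + x) ^ 2 + (x * phiP a x) ^ 2) 0 :=
    ((continuousAt_const.add continuousAt_id).pow 2).add ((continuousAt_id.mul hphi).pow 2)
  have hdP : ContinuousAt (fun x => Real.sqrt ((1 + x) ^ 2 + (x * phiP a x) ^ 2)) 0 :=
    Real.continuous_sqrt.continuousAt.comp hinP
  have hdP0 : Real.sqrt ((1 + (0:ℝ)) ^ 2 + ((0:ℝ) * phiP a 0) ^ 2) ≠ 0 := by norm_num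
  have hinM : ContinuousAt (fun x => (1 + x) ^ 2 + (psiM a x) ^ 2) 0 :=
    ((continuousAt_const.add continuousAt_id).pow 2).add (hpsi.pow 2)
  have hdM : ContinuousAt (fun x => Real.sqrt ((1 + x) ^ 2 + (psiM a x) ^ 2)) 0 :=
    Real.continuous_sqrt.continuousAt.comp hinM
  have hdM0 : Real.sqrt ((1 + (0:ℝ)) ^ 2 + (psiM a 0) ^ 2) ≠ 0 :=
    ne_of_gt (Real.sqrt_pos.mpr (by positivity))
  apply continuousAt_pi.mpr; intro i; apply continuousAt_pi.mpr; intro j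
  fin_cases i <;> fin_cases j <;> simp only [Pfun, Matrix.of_apply, Matrix.cons_val',
    Matrix.cons_val_zero, Matrix.cons_val_one, Matrix.head_cons, Matrix.empty_val',
    Matrix.cons_val_fin_one, Matrix.head_fin_const]
  · exact (continuousAt_id.mul hphi).div hdP hdP0
  · exact (continuousAt_const.add continuousAt_id).div hdP hdP0
  · exact hpsi.div hdM hdM0
  · exact (continuousAt_const.add continuousAt_id).div hdM hdM0

lemma tendsto_Pmat (a : ℝ) (ha : 0 < a) :
    Filter.Tendsto (fun η => Pmat a η) Filter.atTop (nhds (Pinf a)) := by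
  have h := (Pfun_contAt a ha).tendsto.comp tendsto_inv_atTop_zero
  rw [Pfun_zero a ha] at h
  apply h.congr'
  filter_upwards [Filter.eventually_gt_atTop 0] with η hη
  exact (Pmat_eq a η ha hη).symm

lemma Pinf_inv (a : ℝ) (ha : 0 < a) :
    (Pinf a)⁻¹ = !![1 / a, -Real.sqrt (1 + a ^ 2) / a; 1, 0] := by
  apply Matrix.inv_eq_right_inv
  have hs : Real.sqrt (1 + a ^ 2) ≠ 0 := ne_of_gt (Real.sqrt_pos.mpr (by positivity))
  have hs2 : Real.sqrt (1 + a ^ 2) ^ 2 = 1 + a ^ 2 := Real.sq_sqrt (by positivity)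
  have ha' : a ≠ 0 := ne_of_gt ha
  ext i j
  fin_cases i <;> fin_cases j <;>
    simp [Pinf, Matrix.mul_apply, Fin.sum_univ_two] <;> field_simp <;> nlinarith [hs2]

lemma tendsto_Pinv (a : ℝ) (ha : 0 < a) :
    Filter.Tendsto (fun η => (Pmat a η)⁻¹) Filter.atTop (nhds ((Pinf a)⁻¹)) := by
  have hP := tendsto_Pmat a ha
  have hdet : Filter.Tendsto (fun η => (Pmat a η).det) Filter.atTop (nhds (Pinf a).det) :=
    ((Continuous.matrix_det (continuous_id)).tendsto _).comp hP
  have hdet0 : (Pinf a).det ≠ 0 := by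
    have hs : (0:ℝ) < Real.sqrt (1 + a ^ 2) := Real.sqrt_pos.mpr (by positivity)
    rw [Pinf, Matrix.det_fin_two_of]
    have : (0:ℝ) * (1 / Real.sqrt (1 + a ^ 2)) - 1 * (-a / Real.sqrt (1 + a ^ 2))
        = a / Real.sqrt (1 + a ^ 2) := by ring
    rw [this]
    positivity
  have hadj : Filter.Tendsto (fun η => (Pmat a η).adjugate) Filter.atTop
      (nhds (Pinf a).adjugate) :=
    ((Continuous.matrix_adjugate (continuous_id)).tendsto _).comp hP
  have key : ∀ M : Matrix (Fin 2) (Fin 2) ℝ, M⁻¹ = (M.det)⁻¹ • M.adjugate := fun M => by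
    rw [Matrix.inv_def, Ring.inverse_eq_inv']
  simp only [key]
  exact (hdet.inv₀ hdet0).smul hadj

theorem stmt14 (a : ℝ) (ha : 0 < a) :
    Filter.Tendsto (fun η => (Pmat a η)⁻¹)
      Filter.atTop (nhds !![1 / a, -Real.sqrt (1 + a ^ 2) / a; 1, 0]) ∧
    Filter.Tendsto (fun η => fun i => (Pmat a η)⁻¹ i 0)
      Filter.atTop (nhds ![1 / a, 1]) ∧
    Filter.Tendsto (fun η => fun i => (Pmat a η)⁻¹ i 1)
      Filter.atTop (nhds ![-Real.sqrt (1 + a ^ 2) / a, 0]) ∧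
    (∃ c < (0 : ℝ), (![-Real.sqrt (1 + a ^ 2) / a, 0] : Fin 2 → ℝ) = c • ![1 / a, 0]) := by
  set T : Matrix (Fin 2) (Fin 2) ℝ := !![1 / a, -Real.sqrt (1 + a ^ 2) / a; 1, 0] with hT
  have hinv : Filter.Tendsto (fun η => (Pmat a η)⁻¹) Filter.atTop (nhds T) := by
    rw [hT, ← Pinf_inv a ha]; exact tendsto_Pinv a ha
  have hcol : ∀ j : Fin 2, Filter.Tendsto (fun η => fun i => (Pmat a η)⁻¹ i j)
      Filter.atTop (nhds (fun i => T i j)) := by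
    intro j
    exact ((continuous_pi fun i : Fin 2 =>
      (continuous_apply j).comp (continuous_apply i)).tendsto T).comp hinv
  have hc0 : (fun i => T i 0) = ![1 / a, 1] := by
    funext i; fin_cases i <;> simp [hT]
  have hc1 : (fun i => T i 1) = ![-Real.sqrt (1 + a ^ 2) / a, 0] := by
    funext i; fin_cases i <;> simp [hT]
  refine ⟨hinv, ?_, ?_, ?_⟩
  · rw [← hc0]; exact hcol 0
  · rw [← hc1]; exact hcol 1
  · refine ⟨-Real.sqrt (1 + a ^ 2), neg_lt_zero.mpr (Real.sqrt_pos.mpr (by positivity)), ?_⟩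
    funext i
    fin_cases i <;> simp <;> ring
end

section
/- Let f : ℝ → ℝ be differentiable with f′(u) > 0 for every u ∈ ℝ, and fix c ∈ ℝ. If μ : [0,∞) → ℝ is a differentiable function satisfying the boundary-layer equation μ′(y) = f(c + μ(y)) − f(c) for all y ≥ 0 and μ is bounded on [0,∞), then μ(y) = 0 for all y ≥ 0. In other words, when f′ > 0 the only bounded solution of the boundary-layer ODE is the zero solution. -/
/-!
If `μ' = F ∘ μ` with `F` strictly increasing and `F 0 = 0`, then once `μ` is positive at some
point its slope stays at least `F (μ y₀) > 0`, so `μ` grows at least linearly and cannot be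
bounded. Applying this to `μ` and to `-μ` (which solves the equation for `v ↦ -F (-v)`) forces
`μ = 0`. For the boundary-layer equation, `F v = f (c + v) - f c`.
-/

theorem linear_le_of_hasDerivAt_comp_of_monotone {F μ : ℝ → ℝ} {y₀ : ℝ} (hF : Monotone F)
    (hpos : 0 < F (μ y₀)) (hμ : ∀ y, y₀ ≤ y → HasDerivAt μ (F (μ y)) y) :
    ∀ y, y₀ ≤ y → μ y₀ + F (μ y₀) / 2 * (y - y₀) ≤ μ y := by
  intro y hy
  set L : ℝ → ℝ := fun x => μ y₀ + F (μ y₀) / 2 * (x - y₀)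
  have hL : ∀ x, HasDerivAt (fun x => -L x) (-(F (μ y₀) / 2)) x := fun x => by
    simpa only [mul_one] using ((((hasDerivAt_id' x).sub_const y₀).const_mul
      (F (μ y₀) / 2)).const_add (μ y₀)).fun_neg
  -- Fence `-μ` by `-L`: where they touch, `μ x = L x ≥ μ y₀`, so `μ' x ≥ F (μ y₀) > L'`.
  have hfence := image_le_of_deriv_right_lt_deriv_boundary (a := y₀) (b := y) (f := fun x => -μ x)
    (fun x hx => (hμ x hx.1).continuousAt.neg.continuousWithinAt)
    (fun x hx => (hμ x hx.1).neg.hasDerivWithinAt) (by simp [L]) hL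
    (fun x hx hcontact => by
      have hLx : μ y₀ ≤ L x := le_add_of_nonneg_right (mul_nonneg (half_pos hpos).le (sub_nonneg.2 hx.1))
      have : F (μ y₀) ≤ F (μ x) := hF (by linarith)
      linarith)
    ⟨hy, le_rfl⟩
  simpa [L] using hfence

theorem nonpos_of_hasDerivAt_comp_of_bddAbove {F μ : ℝ → ℝ} (hF : StrictMono F) (hF₀ : F 0 = 0)
    (hμ : ∀ y, 0 ≤ y → HasDerivAt μ (F (μ y)) y) (hbdd : ∃ K, ∀ y, 0 ≤ y → μ y ≤ K) :
    ∀ y, 0 ≤ y → μ y ≤ 0 := by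
  intro y₀ hy₀
  by_contra! hμy₀
  obtain ⟨K, hK⟩ := hbdd
  set δ := F (μ y₀)
  have hδ : 0 < δ := hF₀ ▸ hF hμy₀
  have hKpos : 0 < K := hμy₀.trans_le (hK y₀ hy₀)
  have hy : y₀ ≤ y₀ + 2 * K / δ := le_add_of_nonneg_right (by positivity)
  have hgrowth := linear_le_of_hasDerivAt_comp_of_monotone hF.monotone hδ
    (fun y hy => hμ y (hy₀.trans hy)) _ hy
  have hlin : δ / 2 * (y₀ + 2 * K / δ - y₀) = K := by field_simp; ring
  linarith [hK _ (hy₀.trans hy)]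

theorem stmt18_general (f : ℝ → ℝ) (hf' : ∀ u : ℝ, 0 < deriv f u)
    (c : ℝ) (μ : ℝ → ℝ)
    (hode : ∀ y : ℝ, 0 ≤ y → HasDerivAt μ (f (c + μ y) - f c) y)
    (hbd : ∃ K : ℝ, ∀ y : ℝ, 0 ≤ y → |μ y| ≤ K) :
    ∀ y : ℝ, 0 ≤ y → μ y = 0 := by
  set F : ℝ → ℝ := fun v => f (c + v) - f c
  have hF : StrictMono F := fun a b hab =>
    sub_lt_sub_right (strictMono_of_deriv_pos hf' (add_lt_add_right hab c)) _
  obtain ⟨K, hK⟩ := hbd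
  have hle := nonpos_of_hasDerivAt_comp_of_bddAbove hF (by simp [F]) hode
    ⟨K, fun y hy => (le_abs_self _).trans (hK y hy)⟩
  have hge := nonpos_of_hasDerivAt_comp_of_bddAbove (F := fun v => -F (-v)) (μ := fun y => -μ y)
    (fun a b hab => neg_lt_neg (hF (neg_lt_neg hab))) (by simp [F])
    (fun y hy => by simpa [F] using (hode y hy).fun_neg)
    ⟨K, fun y hy => (neg_le_abs _).trans (hK y hy)⟩
  intro y hy
  linarith [hle y hy, hge y hy]

theorem stmt18 (f : ℝ → ℝ) (hf : Differentiable ℝ f) (hf' : ∀ u : ℝ, 0 < deriv f u)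
    (c : ℝ) (μ : ℝ → ℝ)
    (hode : ∀ y : ℝ, 0 ≤ y → HasDerivAt μ (f (c + μ y) - f c) y)
    (hbd : ∃ K : ℝ, ∀ y : ℝ, 0 ≤ y → |μ y| ≤ K) :
    ∀ y : ℝ, 0 ≤ y → μ y = 0 :=
  stmt18_general f hf' c μ hode hbd
end
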